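/- For every real α > -1 and every integer n ≥ 3, the best Markov constant satisfies c_n(α)⁴ ≤ (n(n+1)/(2(α+1)²(α+3))) · [ n² + (2α²+5α+6)n/(3(α+2)) + (α+1)(α+6)/(3(α+2)) ]. -/

import Mathlib

open MeasureTheory

/-- The weighted `L²` norm with the Laguerre weight `w_α(x) = x^α e^{-x}` on `(0,∞)`. -/
noncomputable def laguerreNorm (α : ℝ) (f : ℝ → ℝ) : ℝ :=
  Real.sqrt (∫ x in Set.Ioi (0 : ℝ), (f x) ^ 2 * (x ^ α * Real.exp (-x)))

/-- The best Markov constant `c_n(α)` in the inequality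
`‖p'‖_{w_α} ≤ c_n(α) ‖p‖_{w_α}` over polynomials of degree at most `n`. -/
noncomputable def markovConst (n : ℕ) (α : ℝ) : ℝ :=
  sSup {r : ℝ | ∃ p : Polynomial ℝ, p ≠ 0 ∧ p.natDegree ≤ n ∧
    r = laguerreNorm α (fun x => (Polynomial.derivative p).eval x) /
        laguerreNorm α (fun x => p.eval x)}

/-!
Let `L_k = L_k^{(α)}` be the Laguerre polynomials and `Φ p = ∫₀^∞ p w_α`. The differential
equation `x L_k'' + (α + 1 - x) L_k' = -k L_k` is symmetric for `Φ` (Pearson equation), so the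
`L_k` are orthogonal, and `(k + 1) h_{k+1} = (k + 1 + α) h_k` for `h_k = Φ(L_k²)`. Since
`L_k' = -∑_{i<k} L_i`, the Gram matrix of derivatives is `Φ(L_j' L_k') = ∑_{i < min j k} h_i`.
For `p = ∑ b_k L_k` of degree `≤ n`, Cauchy–Schwarz bounds `Φ(p'²) = ∑ b_j b_k Φ(L_j' L_k')` by
`‖M‖_F Φ(p²)`, where `M_{jk} = Φ(L_j' L_k') / √(h_j h_k)`, so `c_n(α)⁴ ≤ ‖M‖_F²`; the recurrence
for `h_k` evaluates `‖M‖_F²` in closed form, giving exactly the stated bound.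
-/

open Polynomial Finset

open scoped Nat

theorem sum_range_succ_sum_range_succ_of_symm {R : Type*} [CommSemiring R] (F : ℕ → ℕ → R)
    (hF : ∀ j k, F j k = F k j) (N : ℕ) :
    ∑ j ∈ range (N + 1), ∑ k ∈ range (N + 1), F j k =
      ∑ j ∈ range N, ∑ k ∈ range N, F j k + F N N + 2 * ∑ k ∈ range N, F N k := by
  simp only [sum_range_succ, sum_add_distrib, hF _ N]
  ring

theorem sq_sum_sum_mul_le {ι : Type*} (s : Finset ι) {h : ι → ℝ} (hpos : ∀ i ∈ s, 0 < h i)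
    (b : ι → ℝ) (G : ι → ι → ℝ) :
    (∑ j ∈ s, ∑ k ∈ s, b j * b k * G j k) ^ 2 ≤
      (∑ j ∈ s, ∑ k ∈ s, G j k ^ 2 / (h j * h k)) * (∑ k ∈ s, b k ^ 2 * h k) ^ 2 := by
  have hsq : (∑ k ∈ s, b k ^ 2 * h k) ^ 2 = ∑ j ∈ s, ∑ k ∈ s, b j ^ 2 * h j * (b k ^ 2 * h k) := by
    rw [sq, sum_mul_sum]
  rw [hsq, mul_comm, ← sum_product', ← sum_product', ← sum_product']
  refine sum_sq_le_sum_mul_sum_of_sq_le_mul _ (fun x hx => ?_) (fun x hx => ?_) (fun x hx => ?_)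
    <;> have hj := hpos _ (mem_product.1 hx).1 <;> have hk := hpos _ (mem_product.1 hx).2
  · positivity
  · positivity
  · apply le_of_eq
    field_simp

theorem Real.sSup_pow_le {S : Set ℝ} {k : ℕ} {T : ℝ} (hk : k ≠ 0) (hT : 0 ≤ T)
    (hS : ∀ r ∈ S, 0 ≤ r) (hST : ∀ r ∈ S, r ^ k ≤ T) : sSup S ^ k ≤ T := by
  have hroot : 0 ≤ T ^ (k⁻¹ : ℝ) := Real.rpow_nonneg hT _
  calc sSup S ^ k ≤ (T ^ (k⁻¹ : ℝ)) ^ k := by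
        refine pow_le_pow_left₀ (Real.sSup_nonneg hS) (Real.sSup_le (fun r hr => ?_) hroot) k
        rw [← pow_le_pow_iff_left₀ (hS r hr) hroot hk, Real.rpow_inv_natCast_pow hT hk]
        exact hST r hr
    _ = T := Real.rpow_inv_natCast_pow hT hk

noncomputable section

variable {α : ℝ}

def markovFrobeniusBound (α : ℝ) (n : ℕ) : ℝ :=
  n * (n + 1) / (2 * (α + 1) ^ 2 * (α + 3)) *
    (n ^ 2 + (2 * α ^ 2 + 5 * α + 6) * n / (3 * (α + 2)) + (α + 1) * (α + 6) / (3 * (α + 2)))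

section Recurrence

variable {h : ℕ → ℝ}

theorem add_one_mul_sum_range_of_recurrence
    (hrec : ∀ n : ℕ, ((n : ℝ) + 1) * h (n + 1) = (n + 1 + α) * h n) (k : ℕ) :
    (α + 1) * ∑ i ∈ range k, h i = k * h k := by
  induction k with
  | zero => simp
  | succ k ih =>
    rw [sum_range_succ]
    push_cast
    linear_combination ih - hrec k

theorem sum_range_sq_mul_of_recurrence
    (hrec : ∀ n : ℕ, ((n : ℝ) + 1) * h (n + 1) = (n + 1 + α) * h n) (k : ℕ) :
    (α + 2) * (α + 3) * ∑ i ∈ range k, (i : ℝ) ^ 2 * h i =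
      k * (k - 1) * ((α + 2) * k - (α + 1)) * h k := by
  induction k with
  | zero => simp
  | succ k ih =>
    rw [sum_range_succ]
    push_cast
    linear_combination ih - k * ((α + 2) * k + 1) * hrec k

theorem sum_sum_sq_div_of_recurrence (hα : -1 < α) (hpos : ∀ k, 0 < h k)
    (hrec : ∀ n : ℕ, ((n : ℝ) + 1) * h (n + 1) = (n + 1 + α) * h n) (n : ℕ) :
    ∑ j ∈ range (n + 1), ∑ k ∈ range (n + 1), (∑ i ∈ range (min j k), h i) ^ 2 / (h j * h k) =
      markovFrobeniusBound α n := by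
  have hα1 : α + 1 ≠ 0 := by linarith
  have hα2 : α + 2 ≠ 0 := by linarith
  have hα3 : α + 3 ≠ 0 := by linarith
  have entry : ∀ j k, k ≤ j →
      (∑ i ∈ range (min j k), h i) ^ 2 / (h j * h k) = k ^ 2 * h k / ((α + 1) ^ 2 * h j) := by
    intro j k hkj
    have hsum : ∑ i ∈ range k, h i = k * h k / (α + 1) := by
      rw [eq_div_iff hα1, mul_comm]
      exact add_one_mul_sum_range_of_recurrence hrec k
    rw [min_eq_right hkj, hsum]
    have := (hpos j).ne'
    have := (hpos k).ne'
    field_simp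
  induction n with
  | zero => simp [markovFrobeniusBound]
  | succ n ih =>
    have hrow : ∑ k ∈ range (n + 1), (k : ℝ) ^ 2 * h k =
        (n + 1 : ℕ) * ((n + 1 : ℕ) - 1) * ((α + 2) * (n + 1 : ℕ) - (α + 1)) * h (n + 1) /
          ((α + 2) * (α + 3)) := by
      rw [eq_div_iff (mul_ne_zero hα2 hα3), mul_comm]
      exact sum_range_sq_mul_of_recurrence hrec (n + 1)
    rw [sum_range_succ_sum_range_succ_of_symm _ (fun j k => by rw [min_comm, mul_comm (h j)]), ih,
      entry _ _ le_rfl, sum_congr rfl fun k hk => entry _ _ (mem_range.1 hk).le, ← sum_div, hrow,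
      markovFrobeniusBound, markovFrobeniusBound]
    have := (hpos (n + 1)).ne'
    push_cast
    field_simp
    ring

end Recurrence

theorem add_nat_add_one_pos (hα : -1 < α) (k : ℕ) : 0 < α + k + 1 := by
  linarith [k.cast_nonneg (α := ℝ)]

theorem Gamma_add_nat_add_one_pos (hα : -1 < α) (k : ℕ) : 0 < Real.Gamma (α + k + 1) :=
  Real.Gamma_pos_of_pos (add_nat_add_one_pos hα k)

theorem Gamma_add_nat_succ_add_one (hα : -1 < α) (k : ℕ) :
    Real.Gamma (α + (k + 1 : ℕ) + 1) = (α + k + 1) * Real.Gamma (α + k + 1) := by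
  rw [Nat.cast_succ, ← add_assoc, Real.Gamma_add_one (add_nat_add_one_pos hα k).ne']

/-- The coefficient `(-1)^i binom(n + α, n - i) / i!` of `x^i` in the Laguerre polynomial
`L_n^{(α)}`, with the binomial coefficient written through `Γ`. -/
def laguerreCoeff (α : ℝ) (n i : ℕ) : ℝ :=
  if i ≤ n then
    (-1) ^ i * Real.Gamma (α + n + 1) / (Real.Gamma (α + i + 1) * i ! * (n - i)!)
  else 0

def laguerre (α : ℝ) (n : ℕ) : ℝ[X] :=
  ∑ i ∈ range (n + 1), monomial i (laguerreCoeff α n i)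

theorem coeff_laguerre (α : ℝ) (n i : ℕ) : (laguerre α n).coeff i = laguerreCoeff α n i := by
  simp only [laguerre, finsetSum_coeff, coeff_monomial, sum_ite_eq', mem_range, laguerreCoeff]
  split_ifs <;> first | rfl | omega

theorem laguerreCoeff_of_lt {n i : ℕ} (h : n < i) : laguerreCoeff α n i = 0 :=
  if_neg h.not_ge

theorem laguerreCoeff_of_add (α : ℝ) {n i d : ℕ} (h : i + d = n) : laguerreCoeff α n i =
    (-1) ^ i * Real.Gamma (α + n + 1) / (Real.Gamma (α + i + 1) * i ! * d !) := by
  rw [laguerreCoeff, if_pos (h ▸ Nat.le_add_right i d), ← h, Nat.add_sub_cancel_left]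

theorem laguerreCoeff_self_ne_zero (hα : -1 < α) (n : ℕ) : laguerreCoeff α n n ≠ 0 := by
  have := Gamma_add_nat_add_one_pos hα n
  rw [laguerreCoeff, if_pos le_rfl]
  positivity

theorem laguerreCoeff_zero_zero (hα : -1 < α) : laguerreCoeff α 0 0 = 1 := by
  have := Gamma_add_nat_add_one_pos hα 0
  rw [laguerreCoeff, if_pos le_rfl]
  field_simp
  simp

theorem laguerreCoeff_succ_right (hα : -1 < α) (n i : ℕ) :
    (i + 1) * (α + i + 1) * laguerreCoeff α n (i + 1) = (i - n) * laguerreCoeff α n i := by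
  rcases lt_trichotomy i n with h | rfl | h
  · obtain ⟨d, rfl⟩ := Nat.exists_eq_add_of_lt h
    rw [laguerreCoeff_of_add α (show i + 1 + d = i + d + 1 by omega),
      laguerreCoeff_of_add α (show i + (d + 1) = i + d + 1 by omega),
      Gamma_add_nat_succ_add_one hα i]
    have := Gamma_add_nat_add_one_pos hα i
    have := add_nat_add_one_pos hα i
    push_cast [Nat.factorial_succ, pow_succ]
    field_simp
    ring
  · simp [laguerreCoeff_of_lt (Nat.lt_succ_self i)]
  · simp [laguerreCoeff_of_lt h, laguerreCoeff_of_lt (h.trans (Nat.lt_succ_self i))]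

theorem laguerreCoeff_succ_succ (hα : -1 < α) (n i : ℕ) :
    (i + 1) * laguerreCoeff α (n + 1) (i + 1) =
      (i + 1) * laguerreCoeff α n (i + 1) - laguerreCoeff α n i := by
  rcases lt_trichotomy i n with h | rfl | h
  · obtain ⟨d, rfl⟩ := Nat.exists_eq_add_of_lt h
    rw [laguerreCoeff_of_add α (show i + 1 + (d + 1) = i + d + 1 + 1 by omega),
      laguerreCoeff_of_add α (show i + 1 + d = i + d + 1 by omega),
      laguerreCoeff_of_add α (show i + (d + 1) = i + d + 1 by omega),
      Gamma_add_nat_succ_add_one hα (i + d + 1), Gamma_add_nat_succ_add_one hα i]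
    have := Gamma_add_nat_add_one_pos hα i
    have := add_nat_add_one_pos hα i
    have := add_nat_add_one_pos hα (i + d + 1)
    push_cast [Nat.factorial_succ, pow_succ]
    field_simp
    ring
  · rw [laguerreCoeff_of_add α (show i + 1 + 0 = i + 1 by omega),
      laguerreCoeff_of_lt (Nat.lt_succ_self i), laguerreCoeff_of_add α (show i + 0 = i by omega),
      Gamma_add_nat_succ_add_one hα i]
    have := Gamma_add_nat_add_one_pos hα i
    have := add_nat_add_one_pos hα i
    push_cast [Nat.factorial_succ, pow_succ]
    field_simp
    ring
  · simp [laguerreCoeff_of_lt h, laguerreCoeff_of_lt (h.trans (Nat.lt_succ_self i)),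
      laguerreCoeff_of_lt (Nat.succ_lt_succ h)]

theorem laguerreCoeff_succ_left (hα : -1 < α) (n i : ℕ) :
    (n + 1 + α) * laguerreCoeff α n i = (n + 1 - i) * laguerreCoeff α (n + 1) i := by
  rcases lt_trichotomy i (n + 1) with h | rfl | h
  · obtain ⟨d, rfl⟩ := Nat.exists_eq_add_of_le (Nat.le_of_lt_succ h)
    rw [laguerreCoeff_of_add α rfl, laguerreCoeff_of_add α (show i + (d + 1) = i + d + 1 by omega),
      Gamma_add_nat_succ_add_one hα (i + d)]
    have := Gamma_add_nat_add_one_pos hα i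
    push_cast [Nat.factorial_succ]
    field_simp
    ring
  · simp [laguerreCoeff_of_lt (Nat.lt_succ_self n)]
  · simp [laguerreCoeff_of_lt h, laguerreCoeff_of_lt ((Nat.lt_succ_self n).trans h)]

theorem laguerre_ode (hα : -1 < α) (n : ℕ) :
    X * derivative (derivative (laguerre α n)) + C (α + 1) * derivative (laguerre α n) -
      X * derivative (laguerre α n) = C (-(n : ℝ)) * laguerre α n := by
  ext (_ | i)
  · simp only [coeff_add, coeff_sub, coeff_C_mul, coeff_X_mul_zero, coeff_derivative,
      coeff_laguerre]
    linear_combination laguerreCoeff_succ_right hα n 0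
  · simp only [coeff_add, coeff_sub, coeff_C_mul, coeff_X_mul, coeff_derivative, coeff_laguerre]
    linear_combination (norm := (push_cast; ring)) laguerreCoeff_succ_right hα n (i + 1)

theorem derivative_laguerre_succ (hα : -1 < α) (n : ℕ) :
    derivative (laguerre α (n + 1)) = derivative (laguerre α n) - laguerre α n := by
  ext i
  simp only [coeff_sub, coeff_derivative, coeff_laguerre]
  linear_combination laguerreCoeff_succ_succ hα n i

theorem X_mul_derivative_laguerre_succ (hα : -1 < α) (n : ℕ) :
    X * derivative (laguerre α (n + 1)) =
      C ((n : ℝ) + 1) * laguerre α (n + 1) - C ((n : ℝ) + 1 + α) * laguerre α n := by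
  ext (_ | i)
  · simp only [coeff_sub, coeff_C_mul, coeff_X_mul_zero, coeff_laguerre]
    linear_combination laguerreCoeff_succ_left hα n 0
  · simp only [coeff_sub, coeff_C_mul, coeff_X_mul, coeff_derivative, coeff_laguerre]
    linear_combination (norm := (push_cast; ring)) laguerreCoeff_succ_left hα n (i + 1)

theorem laguerre_zero (hα : -1 < α) : laguerre α 0 = 1 := by
  simp [laguerre, laguerreCoeff_zero_zero hα]

theorem derivative_laguerre (hα : -1 < α) (n : ℕ) :
    derivative (laguerre α n) = -∑ k ∈ range n, laguerre α k := by
  induction n with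
  | zero => simp [laguerre_zero hα]
  | succ n ih => rw [derivative_laguerre_succ hα, ih, sum_range_succ]; ring

theorem exists_eq_sum_laguerre (hα : -1 < α) {m : ℕ} {p : ℝ[X]} (hp : p.natDegree ≤ m) :
    ∃ b : ℕ → ℝ, p = ∑ k ∈ range (m + 1), C (b k) * laguerre α k := by
  induction m generalizing p with
  | zero =>
    refine ⟨fun _ => p.coeff 0, ?_⟩
    rw [eq_C_of_natDegree_le_zero hp]
    simp [laguerre_zero hα]
  | succ m ih =>
    set r := p.coeff (m + 1) / laguerreCoeff α (m + 1) (m + 1)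
    have hlow : (p - C r * laguerre α (m + 1)).natDegree ≤ m := by
      rw [natDegree_le_iff_coeff_eq_zero]
      intro N hN
      rw [coeff_sub, coeff_C_mul, coeff_laguerre]
      obtain rfl | hN := (Nat.succ_le_of_lt hN).eq_or_lt
      · rw [div_mul_cancel₀ _ (laguerreCoeff_self_ne_zero hα _), sub_self]
      · rw [coeff_eq_zero_of_natDegree_lt (hp.trans_lt hN), laguerreCoeff_of_lt hN]
        ring
    obtain ⟨b, hb⟩ := ih hlow
    refine ⟨Function.update b (m + 1) r, ?_⟩
    rw [sum_range_succ, Function.update_self,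
      sum_congr rfl fun k hk => by rw [Function.update_of_ne (mem_range.1 hk).ne], ← hb]
    ring

/-- The functional `p ↦ ∫₀^∞ p(x) x^α e^{-x} dx`, defined algebraically by its moments
`Γ(α + k + 1)`. -/
def laguerreMoment (α : ℝ) : ℝ[X] →ₗ[ℝ] ℝ :=
  lsum fun k => LinearMap.toSpanSingleton ℝ ℝ (Real.Gamma (α + k + 1))

theorem laguerreMoment_monomial (α : ℝ) (k : ℕ) (a : ℝ) :
    laguerreMoment α (monomial k a) = a * Real.Gamma (α + k + 1) := by
  simp [laguerreMoment, sum_monomial_index]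

theorem laguerreMoment_C_mul (α a : ℝ) (p : ℝ[X]) :
    laguerreMoment α (C a * p) = a * laguerreMoment α p := by
  rw [← smul_eq_C_mul, map_smul, smul_eq_mul]

/-- Integration by parts against the Pearson equation `(x w_α)' = (α + 1 - x) w_α`. -/
theorem laguerreMoment_pearson (hα : -1 < α) (q : ℝ[X]) :
    laguerreMoment α (X * derivative q + C (α + 1) * q - X * q) = 0 := by
  induction q using Polynomial.induction_on' with
  | add p q hp hq =>
    rw [derivative_add, show X * (derivative p + derivative q) + C (α + 1) * (p + q) - X * (p + q) =
      (X * derivative p + C (α + 1) * p - X * p) + (X * derivative q + C (α + 1) * q - X * q) by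
      ring, map_add, hp, hq, add_zero]
  | monomial k a =>
    rw [derivative_monomial, X_mul_monomial, X_mul_monomial, C_mul_monomial, map_sub, map_add,
      laguerreMoment_monomial, laguerreMoment_monomial, laguerreMoment_monomial,
      Gamma_add_nat_succ_add_one hα k]
    rcases k with _ | k
    · simp only [CharP.cast_eq_zero, mul_zero, zero_mul, zero_add]
      ring
    · rw [Nat.add_sub_cancel]
      push_cast
      ring

theorem laguerreMoment_mul_ode (hα : -1 < α) (f g : ℝ[X]) :
    laguerreMoment α (f * (X * derivative (derivative g) + C (α + 1) * derivative g -
      X * derivative g)) = -laguerreMoment α (X * derivative f * derivative g) := by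
  have h := laguerreMoment_pearson hα (f * derivative g)
  rw [derivative_mul, show X * (derivative f * derivative g + f * derivative (derivative g)) +
      C (α + 1) * (f * derivative g) - X * (f * derivative g) = X * derivative f * derivative g +
      f * (X * derivative (derivative g) + C (α + 1) * derivative g - X * derivative g) by ring,
    map_add] at h
  linarith

def laguerreSqNorm (α : ℝ) (n : ℕ) : ℝ := laguerreMoment α (laguerre α n * laguerre α n)

theorem laguerreMoment_laguerre_mul_laguerre (hα : -1 < α) (j k : ℕ) :
    laguerreMoment α (laguerre α j * laguerre α k) = if j = k then laguerreSqNorm α j else 0 := by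
  split_ifs with hjk
  · rw [hjk, laguerreSqNorm]
  have hj := laguerreMoment_mul_ode hα (laguerre α k) (laguerre α j)
  have hk := laguerreMoment_mul_ode hα (laguerre α j) (laguerre α k)
  rw [laguerre_ode hα, mul_left_comm, laguerreMoment_C_mul, mul_comm (laguerre α k),
    mul_right_comm] at hj
  rw [laguerre_ode hα, mul_left_comm, laguerreMoment_C_mul] at hk
  have : ((j : ℝ) - k) * laguerreMoment α (laguerre α j * laguerre α k) = 0 := by
    linear_combination hk - hj
  exact (mul_eq_zero.1 this).resolve_left (sub_ne_zero.2 (Nat.cast_injective.ne hjk))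

theorem laguerreMoment_derivative_laguerre_mul_laguerre (hα : -1 < α) (j k : ℕ) :
    laguerreMoment α (derivative (laguerre α j) * laguerre α k) =
      if k < j then -laguerreSqNorm α k else 0 := by
  rw [derivative_laguerre hα, neg_mul, map_neg, sum_mul, map_sum]
  simp only [laguerreMoment_laguerre_mul_laguerre hα, sum_ite_eq', mem_range]
  split_ifs <;> simp

theorem laguerreMoment_derivative_mul_derivative (hα : -1 < α) (j k : ℕ) :
    laguerreMoment α (derivative (laguerre α j) * derivative (laguerre α k)) =
      ∑ i ∈ range (min j k), laguerreSqNorm α i := by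
  rw [derivative_laguerre hα k, mul_neg, map_neg, mul_sum, map_sum]
  simp only [laguerreMoment_derivative_laguerre_mul_laguerre hα, ← sum_filter,
    sum_neg_distrib, neg_neg]
  congr 1
  ext i
  simp only [mem_filter, mem_range, Nat.lt_min]
  exact and_comm

theorem laguerreSqNorm_zero (hα : -1 < α) : laguerreSqNorm α 0 = Real.Gamma (α + 1) := by
  rw [laguerreSqNorm, laguerre_zero hα, mul_one, ← monomial_zero_one, laguerreMoment_monomial]
  simp

theorem laguerreSqNorm_succ (hα : -1 < α) (n : ℕ) :
    ((n : ℝ) + 1) * laguerreSqNorm α (n + 1) = (n + 1 + α) * laguerreSqNorm α n := by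
  -- `(n + 1) h_{n+1} = Φ(x L_{n+1}'²)` by the differential equation; then expand `x L_{n+1}'`.
  have h := laguerreMoment_mul_ode hα (laguerre α (n + 1)) (laguerre α (n + 1))
  have hX : X * derivative (laguerre α (n + 1)) * derivative (laguerre α (n + 1)) =
      C ((n : ℝ) + 1) * (derivative (laguerre α (n + 1)) * laguerre α (n + 1)) -
        C ((n : ℝ) + 1 + α) * (derivative (laguerre α (n + 1)) * laguerre α n) := by
    rw [mul_right_comm, X_mul_derivative_laguerre_succ hα]
    ring
  rw [laguerre_ode hα, mul_left_comm, laguerreMoment_C_mul, hX, map_sub, laguerreMoment_C_mul,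
    laguerreMoment_C_mul, laguerreMoment_derivative_laguerre_mul_laguerre hα,
    laguerreMoment_derivative_laguerre_mul_laguerre hα, if_neg (lt_irrefl _),
    if_pos (Nat.lt_succ_self n)] at h
  unfold laguerreSqNorm at h ⊢
  push_cast at h
  linear_combination -h

theorem laguerreSqNorm_pos (hα : -1 < α) (n : ℕ) : 0 < laguerreSqNorm α n := by
  induction n with
  | zero => rw [laguerreSqNorm_zero hα]; exact Real.Gamma_pos_of_pos (by linarith)
  | succ n ih =>
    have h := laguerreSqNorm_succ hα n
    have := add_nat_add_one_pos hα n
    refine pos_of_mul_pos_right (h ▸ ?_) (by positivity : (0 : ℝ) ≤ n + 1)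
    nlinarith

theorem eqOn_pow_mul_rpow_mul_exp (α : ℝ) (k : ℕ) :
    Set.EqOn (fun x : ℝ => x ^ k * (x ^ α * Real.exp (-x)))
      (fun x => Real.exp (-x) * x ^ (α + k + 1 - 1)) (Set.Ioi 0) := by
  intro x hx
  simp only [add_sub_cancel_right, Real.rpow_add hx, Real.rpow_natCast]
  ring

theorem integrableOn_pow_mul_rpow_mul_exp (hα : -1 < α) (k : ℕ) :
    IntegrableOn (fun x : ℝ => x ^ k * (x ^ α * Real.exp (-x))) (Set.Ioi 0) :=
  (Real.GammaIntegral_convergent (add_nat_add_one_pos hα k)).congr_fun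
    (eqOn_pow_mul_rpow_mul_exp α k).symm measurableSet_Ioi

theorem integral_pow_mul_rpow_mul_exp (hα : -1 < α) (k : ℕ) :
    ∫ x in Set.Ioi (0 : ℝ), x ^ k * (x ^ α * Real.exp (-x)) = Real.Gamma (α + k + 1) := by
  rw [setIntegral_congr_fun measurableSet_Ioi (eqOn_pow_mul_rpow_mul_exp α k),
    Real.Gamma_eq_integral (add_nat_add_one_pos hα k)]

theorem integrableOn_eval_mul_rpow_mul_exp (hα : -1 < α) (p : ℝ[X]) :
    IntegrableOn (fun x : ℝ => p.eval x * (x ^ α * Real.exp (-x))) (Set.Ioi 0) := by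
  induction p using Polynomial.induction_on' with
  | add p q hp hq =>
    simp only [eval_add, add_mul]
    exact hp.add hq
  | monomial k a =>
    simp only [eval_monomial, mul_assoc]
    exact (integrableOn_pow_mul_rpow_mul_exp hα k).const_mul a

theorem integral_eval_mul_rpow_mul_exp (hα : -1 < α) (p : ℝ[X]) :
    ∫ x in Set.Ioi (0 : ℝ), p.eval x * (x ^ α * Real.exp (-x)) = laguerreMoment α p := by
  induction p using Polynomial.induction_on' with
  | add p q hp hq =>
    simp only [eval_add, add_mul, map_add]
    rw [integral_add (integrableOn_eval_mul_rpow_mul_exp hα p)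
      (integrableOn_eval_mul_rpow_mul_exp hα q), hp, hq]
  | monomial k a =>
    simp only [eval_monomial, mul_assoc]
    rw [integral_const_mul, integral_pow_mul_rpow_mul_exp hα, laguerreMoment_monomial]

theorem laguerreMoment_mul_self_nonneg (hα : -1 < α) (p : ℝ[X]) :
    0 ≤ laguerreMoment α (p * p) := by
  rw [← integral_eval_mul_rpow_mul_exp hα]
  refine setIntegral_nonneg measurableSet_Ioi fun x hx => ?_
  rw [eval_mul]
  exact mul_nonneg (mul_self_nonneg _) (mul_nonneg (Real.rpow_nonneg hx.le α) (Real.exp_nonneg _))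

theorem laguerreNorm_eval (hα : -1 < α) (p : ℝ[X]) :
    laguerreNorm α (fun x => p.eval x) = √(laguerreMoment α (p * p)) := by
  simp only [laguerreNorm, ← integral_eval_mul_rpow_mul_exp hα, eval_mul, sq]

theorem laguerreMoment_sum_mul_sum (α : ℝ) {ι : Type*} (s : Finset ι) (b c : ι → ℝ)
    (u v : ι → ℝ[X]) :
    laguerreMoment α ((∑ j ∈ s, C (b j) * u j) * ∑ k ∈ s, C (c k) * v k) =
      ∑ j ∈ s, ∑ k ∈ s, b j * c k * laguerreMoment α (u j * v k) := by
  simp only [sum_mul_sum, map_sum]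
  refine sum_congr rfl fun j _ => sum_congr rfl fun k _ => ?_
  rw [show C (b j) * u j * (C (c k) * v k) = C (b j * c k) * (u j * v k) by rw [C_mul]; ring,
    laguerreMoment_C_mul]

theorem markovFrobeniusBound_eq (hα : -1 < α) (n : ℕ) :
    ∑ j ∈ range (n + 1), ∑ k ∈ range (n + 1),
        laguerreMoment α (derivative (laguerre α j) * derivative (laguerre α k)) ^ 2 /
          (laguerreSqNorm α j * laguerreSqNorm α k) = markovFrobeniusBound α n := by
  simp only [laguerreMoment_derivative_mul_derivative hα]
  exact sum_sum_sq_div_of_recurrence hα (laguerreSqNorm_pos hα) (laguerreSqNorm_succ hα) n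

theorem markovFrobeniusBound_nonneg (hα : -1 < α) (n : ℕ) : 0 ≤ markovFrobeniusBound α n := by
  rw [← markovFrobeniusBound_eq hα]
  have := laguerreSqNorm_pos hα
  exact sum_nonneg fun j _ => sum_nonneg fun k _ => div_nonneg (sq_nonneg _)
    (mul_pos (this j) (this k)).le

theorem laguerreMoment_derivative_sq_sq_le (hα : -1 < α) {n : ℕ} {p : ℝ[X]}
    (hp : p.natDegree ≤ n) :
    laguerreMoment α (derivative p * derivative p) ^ 2 ≤
      markovFrobeniusBound α n * laguerreMoment α (p * p) ^ 2 := by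
  obtain ⟨b, hb⟩ := exists_eq_sum_laguerre hα hp
  have hsq : laguerreMoment α (p * p) = ∑ k ∈ range (n + 1), b k ^ 2 * laguerreSqNorm α k := by
    rw [hb, laguerreMoment_sum_mul_sum]
    refine sum_congr rfl fun j hj => ?_
    simp only [laguerreMoment_laguerre_mul_laguerre hα, mul_ite, mul_zero, sum_ite_eq, if_pos hj,
      sq]
  rw [hsq, hb]
  simp only [derivative_sum, derivative_C_mul]
  rw [laguerreMoment_sum_mul_sum, ← markovFrobeniusBound_eq hα]
  exact sq_sum_sum_mul_le _ (fun k _ => laguerreSqNorm_pos hα k) b _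

theorem laguerreNorm_derivative_div_pow_four_le (hα : -1 < α) {n : ℕ} {p : ℝ[X]}
    (hp : p.natDegree ≤ n) :
    (laguerreNorm α (fun x => (derivative p).eval x) / laguerreNorm α (fun x => p.eval x)) ^ 4 ≤
      markovFrobeniusBound α n := by
  rw [laguerreNorm_eval hα, laguerreNorm_eval hα, div_pow, show 4 = 2 * 2 from rfl, pow_mul,
    pow_mul, Real.sq_sqrt (laguerreMoment_mul_self_nonneg hα _),
    Real.sq_sqrt (laguerreMoment_mul_self_nonneg hα _)]
  exact div_le_of_le_mul₀ (sq_nonneg _) (markovFrobeniusBound_nonneg hα n)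
    (laguerreMoment_derivative_sq_sq_le hα hp)

end

theorem markov_frobenius_upper_general (α : ℝ) (hα : -1 < α) (n : ℕ) :
    (markovConst n α) ^ 4 ≤
      n * (n + 1) / (2 * (α + 1) ^ 2 * (α + 3)) *
        (n ^ 2 + (2 * α ^ 2 + 5 * α + 6) * n / (3 * (α + 2)) +
          (α + 1) * (α + 6) / (3 * (α + 2))) := by
  refine Real.sSup_pow_le (by norm_num) (markovFrobeniusBound_nonneg hα n) ?_ ?_
  · rintro r ⟨p, -, -, rfl⟩
    exact div_nonneg (Real.sqrt_nonneg _) (Real.sqrt_nonneg _)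
  · rintro r ⟨p, -, hp, rfl⟩
    exact laguerreNorm_derivative_div_pow_four_le hα hp

theorem markov_frobenius_upper (α : ℝ) (hα : -1 < α) (n : ℕ) (hn : 3 ≤ n) :
    (markovConst n α) ^ 4 ≤
      n * (n + 1) / (2 * (α + 1) ^ 2 * (α + 3)) *
        (n ^ 2 + (2 * α ^ 2 + 5 * α + 6) * n / (3 * (α + 2)) +
          (α + 1) * (α + 6) / (3 * (α + 2))) :=
  markov_frobenius_upper_general α hα n
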